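/- arXiv:2111.00249 — 2 statements merged into one kernel-verified Lean document; each statement's English description precedes it below -/
import Mathlib

section
/- For every pair of vertices i,j ∈ I, the one-variable elements E_i(z) := Σ_{d∈ℤ} z_{i1}^d z^{−d} of the big shuffle algebra 𝒱 satisfy, coefficientwise in z and w, the quadratic relation E_i(z)*E_j(w)·ζ̃_{ji}(w/z)·z^{δ_{ij}} = E_j(w)*E_i(z)·ζ̃_{ij}(z/w)·(−w)^{δ_{ij}}. Consequently, the assignment e_{i,d} ↦ z_{i1}^d (i ∈ I, d ∈ ℤ) induces an 𝔽-algebra homomorphism Υ̃ : Ũ⁺ → 𝒱 from the quadratic quantum loop group to the big shuffle algebra. -/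
noncomputable section
set_option linter.unusedSectionVars false
set_option maxHeartbeats 1000000
open scoped BigOperators
open DirectSum

namespace QShuffle

/-! ## Base field 𝔽 = ℚ(q, (t_e)_{e ∈ E}) -/

abbrev FF (E : Type) : Type := FractionRing (MvPolynomial (Option E) ℚ)

def qq (E : Type) : FF E := algebraMap (MvPolynomial (Option E) ℚ) (FF E) (MvPolynomial.X none)

def tt {E : Type} (e : E) : FF E := algebraMap (MvPolynomial (Option E) ℚ) (FF E) (MvPolynomial.X (some e))

variable {I E : Type} [Fintype I] [Fintype E] [DecidableEq I] [DecidableEq E]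
variable {F : Type} [Field F]

/-! ## Quiver combinatorics -/

def edges (src tgt : E → I) (i j : I) : Finset E :=
  Finset.univ.filter fun e => src e = i ∧ tgt e = j

/-- `#_{i→j}` -/
def nE (src tgt : E → I) (i j : I) : ℕ := (edges src tgt i j).card

/-- `#_{ij} = #_{i→j} + #_{j→i}` -/
def nnE (src tgt : E → I) (i j : I) : ℕ := nE src tgt i j + nE src tgt j i

/-- Kronecker delta -/
def dl (i j : I) : ℕ := if i = j then 1 else 0

/-- The double `Ē = E ⊔ E*`. -/
abbrev DEdge (E : Type) : Type := E ⊕ E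

def dsrc (src tgt : E → I) : DEdge E → I := Sum.elim src tgt
def dtgt (src tgt : E → I) : DEdge E → I := Sum.elim tgt src
/-- `t_e` for `e ∈ Ē`, with `t_{e*} = q/t_e`. -/
def dt (q : F) (t : E → F) : DEdge E → F := Sum.elim t fun e => q * (t e)⁻¹

open LaurentPolynomial in
/-- `ζ̃_{ij}(x) = (1-xq⁻¹)^{δ_{ij}} ∏_{e:i→j}(t_e⁻¹ - x) ∏_{e:j→i}(1 - t_e q⁻¹ x⁻¹)`. -/
def zetaT (src tgt : E → I) (q : F) (t : E → F) (i j : I) : LaurentPolynomial F :=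
  (if i = j then 1 - C q⁻¹ * T 1 else 1)
    * ∏ e ∈ edges src tgt i j, (C (t e)⁻¹ - T 1)
    * ∏ e ∈ edges src tgt j i, (1 - C (t e * q⁻¹) * T (-1))

/-! ## The quadratic quantum loop group Ũ⁺ -/

def gen (F : Type) [Field F] (I : Type) (i : I) (d : ℤ) : FreeAlgebra F (I × ℤ) :=
  FreeAlgebra.ι F (i, d)

/-- coefficient of `z^{-a} w^{-b}` in `e_i(z) e_j(w) ζ̃_{ji}(w/z) z^{δ_{ij}}` -/
def quadLHS (src tgt : E → I) (q : F) (t : E → F) (i j : I) (a b : ℤ) : FreeAlgebra F (I × ℤ) :=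
  Finsupp.sum (AddMonoidAlgebra.coeff (zetaT src tgt q t j i)) fun m c =>
    c • (gen F I i (a + (dl i j : ℤ) - m) * gen F I j (b + m))

/-- coefficient of `z^{-a} w^{-b}` in `e_j(w) e_i(z) ζ̃_{ij}(z/w) (-w)^{δ_{ij}}` -/
def quadRHS (src tgt : E → I) (q : F) (t : E → F) (i j : I) (a b : ℤ) : FreeAlgebra F (I × ℤ) :=
  ((-1 : F) ^ dl i j) •
    Finsupp.sum (AddMonoidAlgebra.coeff (zetaT src tgt q t i j)) fun m c =>
      c • (gen F I j (b + (dl i j : ℤ) - m) * gen F I i (a + m))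

/-- The quadratic relations. -/
inductive QuadRel (src tgt : E → I) (q : F) (t : E → F) :
    FreeAlgebra F (I × ℤ) → FreeAlgebra F (I × ℤ) → Prop
  | rel (i j : I) (a b : ℤ) :
      QuadRel src tgt q t (quadLHS src tgt q t i j a b) (quadRHS src tgt q t i j a b)

/-- The quadratic quantum loop group `Ũ⁺`. -/
abbrev Utilde (src tgt : E → I) (q : F) (t : E → F) : Type :=
  RingQuot (QuadRel src tgt q t)

/-- `e_{i,d} ∈ Ũ⁺` -/
def eU (src tgt : E → I) (q : F) (t : E → F) (i : I) (d : ℤ) : Utilde src tgt q t :=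
  RingQuot.mkAlgHom F (QuadRel src tgt q t) (gen F I i d)

/-! ## Words -/

abbrev Word (I : Type) : Type := List (I × ℤ)

/-- `e_w ∈ Ũ⁺` -/
def eW (src tgt : E → I) (q : F) (t : E → F) (w : Word I) : Utilde src tgt q t :=
  (w.map fun p => eU src tgt q t p.1 p.2).prod

/-- `e_w` in the free algebra -/
def eWFree (F : Type) [Field F] {I : Type} (w : Word I) : FreeAlgebra F (I × ℤ) :=
  (w.map fun p => gen F I p.1 p.2).prod

def colorCount (w : Word I) (i : I) : ℕ := (w.map Prod.fst).count i
def expSum (w : Word I) : ℤ := (w.map Prod.snd).sum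

/-- letter order: `i^{(d)} < j^{(e)}` iff `d > e` or (`d = e` and `i < j`) -/
def letterLT [LT I] (p r : I × ℤ) : Prop := r.2 < p.2 ∨ (p.2 = r.2 ∧ p.1 < r.1)

/-- lexicographic order on words -/
def wordLT [LT I] (w v : Word I) : Prop := List.Lex letterLT w v
def wordLE [LT I] (w v : Word I) : Prop := wordLT w v ∨ w = v

/-- A non-increasing word. -/
def NonInc (src tgt : E → I) [LinearOrder I] (w : Word I) : Prop :=
  ∀ a b : Fin w.length, a < b →
    (w.get a).2 < (w.get b).2 + ∑ s ∈ Finset.Ico a b, (nnE src tgt (w.get s).1 (w.get b).1 : ℤ)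
    ∨ ((w.get a).2 = (w.get b).2 + ∑ s ∈ Finset.Ico a b, (nnE src tgt (w.get s).1 (w.get b).1 : ℤ)
        ∧ (w.get b).1 ≤ (w.get a).1)

/-! ## The big shuffle algebra: graded pieces -/

abbrev VarType {I : Type} (ν : I → ℕ) : Type := Σ i : I, Fin (ν i)

abbrev Laur (F : Type) [Field F] {I : Type} (ν : I → ℕ) : Type :=
  AddMonoidAlgebra F (VarType ν →₀ ℤ)

def rnm {ν : I → ℕ} (g : VarType ν ≃ VarType ν) (R : Laur F ν) : Laur F ν :=
  AddMonoidAlgebra.mapDomain (Finsupp.equivMapDomain g) R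

def ColorPres {ν : I → ℕ} (g : VarType ν ≃ VarType ν) : Prop := ∀ x : VarType ν, (g x).1 = x.1

def IsSym {ν : I → ℕ} (R : Laur F ν) : Prop :=
  ∀ g : VarType ν ≃ VarType ν, ColorPres g → rnm g R = R

def SymSub (F : Type) [Field F] {I : Type} (ν : I → ℕ) : Submodule F (Laur F ν) where
  carrier := {R | IsSym R}
  add_mem' := by
    intro R S hR hS g hg
    have h1 := hR g hg
    have h2 := hS g hg
    unfold rnm at *
    rw [AddMonoidAlgebra.mapDomain_add, h1, h2]
  zero_mem' := by
    intro g hg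
    simp [rnm, AddMonoidAlgebra.mapDomain_zero]
  smul_mem' := by
    intro c R hR g hg
    have h1 := hR g hg
    unfold rnm at *
    unfold AddMonoidAlgebra.mapDomain at *
    conv_rhs => rw [← h1]
    show AddMonoidAlgebra.ofCoeff (Finsupp.mapDomain _ (c • AddMonoidAlgebra.coeff R)) =
      AddMonoidAlgebra.ofCoeff (c • Finsupp.mapDomain _ (AddMonoidAlgebra.coeff R))
    rw [Finsupp.mapDomain_smul]

/-- The big shuffle algebra `𝒱` as a graded vector space. -/
abbrev VV (F : Type) [Field F] (I : Type) [Fintype I] [DecidableEq I] : Type :=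
  ⨁ ν : I → ℕ, SymSub F ν

def inclV {F : Type} [Field F] {I : Type} [Fintype I] [DecidableEq I] (ν : I → ℕ) :
    SymSub F (I := I) ν →ₗ[F] VV F I :=
  DirectSum.lof F (I → ℕ) (fun ν => SymSub F ν) ν

def sgm (i : I) : I → ℕ := fun j => if j = i then 1 else 0

def oneVarM (F : Type) [Field F] {I : Type} [DecidableEq I] (i : I) (d : ℤ) :
    Laur F (sgm i) :=
  AddMonoidAlgebra.single (Finsupp.single ⟨i, ⟨0, by simp [sgm]⟩⟩ d) 1

lemma varSubsingleton {i : I} (x y : VarType (sgm i)) : x = y := by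
  obtain ⟨a, fa⟩ := x
  obtain ⟨b, fb⟩ := y
  have ha : a = i := by
    by_contra h
    have h0 : sgm i a = 0 := by simp [sgm, h]
    have := fa.isLt
    omega
  have hb : b = i := by
    by_contra h
    have h0 : sgm i b = 0 := by simp [sgm, h]
    have := fb.isLt
    omega
  subst ha
  subst hb
  have h1 : sgm b b = 1 := by simp [sgm]
  have hfa := fa.isLt
  have hfb := fb.isLt
  congr 1
  exact Fin.ext (by omega)

lemma oneVarM_sym (i : I) (d : ℤ) : IsSym (oneVarM F i d) := by
  intro g hg
  have hgid : g = Equiv.refl _ := Equiv.ext fun x => varSubsingleton _ _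
  subst hgid
  unfold rnm
  have hid : (Finsupp.equivMapDomain (Equiv.refl (VarType (sgm i))) :
      (VarType (sgm i) →₀ ℤ) → (VarType (sgm i) →₀ ℤ)) = id :=
    funext fun l => Finsupp.equivMapDomain_refl l
  rw [hid]
  unfold AddMonoidAlgebra.mapDomain
  rw [Finsupp.mapDomain_id]

/-- `z_{i1}^d` -/
def oneVar (F : Type) [Field F] {I : Type} [Fintype I] [DecidableEq I] (i : I) (d : ℤ) :
    SymSub F (sgm i) :=
  ⟨oneVarM F i d, oneVarM_sym i d⟩

lemma one_sym {ν : I → ℕ} : IsSym (AddMonoidAlgebra.single (0 : VarType ν →₀ ℤ) (1 : F)) := by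
  intro g hg
  unfold rnm
  rw [AddMonoidAlgebra.mapDomain_single]
  simp

instance {ν : I → ℕ} : DecidablePred (fun g : VarType ν ≃ VarType ν => ColorPres g) := fun g =>
  decidable_of_iff (∀ x : VarType ν, (g x).1 = x.1) Iff.rfl

/-! ## Specialization and wheel conditions -/

def specialize {ν : I → ℕ} (ρ : VarType ν → VarType ν) (sc : VarType ν → F) (R : Laur F ν) :
    Laur F ν :=
  Finsupp.sum (AddMonoidAlgebra.coeff R) fun m a =>
    AddMonoidAlgebra.single (Finsupp.mapDomain ρ m) (a * ∏ v ∈ m.support, sc v ^ (m v))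

/-- The 3-variable wheel conditions. -/
def WheelCond (src tgt : E → I) (q : F) (t : E → F) {ν : I → ℕ} (R : Laur F ν) : Prop :=
  ∀ (eb : DEdge E) (va vb vc : VarType ν),
    va.1 = dsrc src tgt eb → vb.1 = dtgt src tgt eb → vc.1 = dsrc src tgt eb →
    va ≠ vc → vb ≠ va → vb ≠ vc →
    specialize
      (fun v => if v = va then vc else if v = vb then vc else v)
      (fun v => if v = va then q else if v = vb then dt q t eb else 1) R = 0

/-! ## The shuffle product, characterized by a polynomial identity -/

/-- the variable `z_v` as a Laurent polynomial -/
def XV {ν : I → ℕ} (v : VarType ν) : Laur F ν :=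
  AddMonoidAlgebra.single (Finsupp.single v 1) 1

/-- substitute the monomial with exponent vector `u` into a one-variable Laurent polynomial -/
def compL {ν : I → ℕ} (l : LaurentPolynomial F) (u : VarType ν →₀ ℤ) : Laur F ν :=
  Finsupp.sum (AddMonoidAlgebra.coeff l) fun m a => AddMonoidAlgebra.single (m • u) a

/-- the exponent vector of `z_x / z_y` -/
def ratio {ν : I → ℕ} (x y : VarType ν) : VarType ν →₀ ℤ :=
  Finsupp.single x 1 - Finsupp.single y 1

/-- `∏_{(u,v) distinct, same color} (z_u - z_v)`, a symmetric Laurent polynomial used to clear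
the denominators in the symmetrized shuffle product. -/
def Dsym (F : Type) [Field F] {I : Type} [Fintype I] [DecidableEq I] (ν : I → ℕ) : Laur F ν :=
  ∏ p ∈ (Finset.univ : Finset (VarType ν × VarType ν)).filter
      (fun p => p.1 ≠ p.2 ∧ p.1.1 = p.2.1),
    (XV p.1 - XV p.2)

def incl1 (ν ν' : I → ℕ) (x : VarType ν) : VarType (ν + ν') :=
  ⟨x.1, Fin.castAdd (ν' x.1) x.2⟩

def incl2 (ν ν' : I → ℕ) (y : VarType ν') : VarType (ν + ν') :=
  ⟨y.1, Fin.natAdd (ν y.1) y.2⟩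

def embed1 (ν ν' : I → ℕ) (R : Laur F ν) : Laur F (ν + ν') :=
  AddMonoidAlgebra.mapDomain (fun m => Finsupp.mapDomain (incl1 ν ν') m) R

def embed2 (ν ν' : I → ℕ) (R : Laur F ν') : Laur F (ν + ν') :=
  AddMonoidAlgebra.mapDomain (fun m => Finsupp.mapDomain (incl2 ν ν') m) R

/-- `Dsym · ∏_{x ∈ vars(ν), y ∈ vars(ν')} ζ_{color x, color y}(z_x / z_y)`, with all
denominators cancelled: the kernel of the shuffle product after clearing denominators. -/
def Kpoly (src tgt : E → I) (q : F) (t : E → F) (ν ν' : I → ℕ) : Laur F (ν + ν') :=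
  (∏ p ∈ (Finset.univ : Finset (VarType ν × VarType ν')),
    (compL (zetaT src tgt q t p.1.1 p.2.1) (ratio (incl1 ν ν' p.1) (incl2 ν ν' p.2))
      * (if p.1.1 = p.2.1 then
          (XV (incl1 ν ν' p.1) - XV (incl2 ν ν' p.2)) * XV (incl2 ν ν' p.2) else 1)))
  * (∏ p ∈ (Finset.univ : Finset (VarType ν × VarType ν)).filter
        (fun p => p.1 ≠ p.2 ∧ p.1.1 = p.2.1),
      (XV (incl1 ν ν' p.1) - XV (incl1 ν ν' p.2)))
  * (∏ p ∈ (Finset.univ : Finset (VarType ν' × VarType ν')).filter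
        (fun p => p.1 ≠ p.2 ∧ p.1.1 = p.2.1),
      (XV (incl2 ν ν' p.1) - XV (incl2 ν ν' p.2)))

/-- The defining identity of the shuffle product `R * R' = P`, with denominators cleared:
`∏_i ν_i! ν'_i! • (Dsym · P) = ∑_{color-preserving g} g ( R ⊗ R' · Kpoly )`. -/
def ShuffleEq (src tgt : E → I) (q : F) (t : E → F) {ν ν' : I → ℕ}
    (R : Laur F ν) (R' : Laur F ν') (P : Laur F (ν + ν')) : Prop :=
  ((∏ i : I, Nat.factorial (ν i) * Nat.factorial (ν' i) : ℕ) : F) • (Dsym F (ν + ν') * P) =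
    ∑ g : {g : Equiv.Perm (VarType (ν + ν')) // ColorPres g},
      rnm g.val (embed1 ν ν' R * embed2 ν ν' R' * Kpoly src tgt q t ν ν')

/-- `(V, ι)` is a model of the big shuffle algebra `𝒱`: an `F`-algebra whose product is
the shuffle product. -/
def IsShuffleAlgebra (src tgt : E → I) (q : F) (t : E → F) (V : Type) [Ring V] [Algebra F V]
    (ι : VV F I ≃ₗ[F] V) : Prop :=
  (ι (inclV 0 ⟨AddMonoidAlgebra.single 0 1, one_sym⟩) = 1) ∧
  ∀ (ν ν' : I → ℕ) (R : SymSub F ν) (R' : SymSub F ν') (P : SymSub F (ν + ν')),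
    ShuffleEq src tgt q t R.val R'.val P.val →
    ι (inclV ν R) * ι (inclV ν' R') = ι (inclV (ν + ν') P)

end QShuffle

namespace QShuffle

variable {I E : Type} [Fintype I] [Fintype E] [DecidableEq I] [DecidableEq E]
variable {F : Type} [Field F]

/-! ## The pairing, via expansion in a Hahn series field

The "expansion in the region `|z_1| ≫ ⋯ ≫ |z_n|`" of a rational function is encoded by
working inside the field of Hahn series over the lexicographic group `Lex (Fin n →₀ ℤ)`
(a Laurent monomial `∏ z_a^{v_a}` is placed in degree `toLex (-v)`, so that each ratio
`z_b/z_a` with `a < b` has positive order, and taking inverses in this field implements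
exactly the geometric series expansions in these ratios). -/

abbrev HF (F : Type) [Field F] (n : ℕ) : Type := HahnSeries (Lex (Fin n →₀ ℤ)) F

/-- the monomial `z_1^{v 1} ⋯ z_n^{v n}` in the Hahn field -/
def monoH {n : ℕ} (v : Fin n → ℤ) : HF F n :=
  HahnSeries.single (toLex (Finsupp.equivFunOnFinite.symm fun a => - v a)) (1 : F)

/-- a Laurent polynomial in the Hahn field -/
def embedH {n : ℕ} (S : AddMonoidAlgebra F (Fin n →₀ ℤ)) : HF F n :=
  Finsupp.sum (AddMonoidAlgebra.coeff S) fun m a => HahnSeries.single (toLex (-m)) a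

/-- the Hahn degree of the ratio `z_b/z_a` -/
def rexp {n : ℕ} (a b : Fin n) : Fin n →₀ ℤ :=
  Finsupp.single a 1 - Finsupp.single b 1

/-- the expansion of `ζ_{c_b, c_a}(z_b/z_a)` in the Hahn field (for `a < b`) -/
def zetaH (src tgt : E → I) (q : F) (t : E → F) {n : ℕ} (c : Fin n → I) (a b : Fin n) :
    HF F n :=
  (Finsupp.sum (AddMonoidAlgebra.coeff (zetaT src tgt q t (c b) (c a))) fun m x =>
      HahnSeries.single (toLex (m • rexp a b)) x)
    * ((1 - HahnSeries.single (toLex (rexp a b)) (1 : F))⁻¹) ^ dl (c b) (c a)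

/-- `⟨e_{c_1,d_1} ⋯ e_{c_n,d_n}, S⟩` for a Laurent polynomial `S` in the variables
`z_1, …, z_n`: the constant term of `z^d · S · ∏_{a<b} ζ_{c_b c_a}(z_b/z_a)⁻¹`,
expanded in the region `|z_1| ≫ ⋯ ≫ |z_n|`. -/
def pairCore (src tgt : E → I) (q : F) (t : E → F) {n : ℕ} (c : Fin n → I) (d : Fin n → ℤ)
    (S : AddMonoidAlgebra F (Fin n →₀ ℤ)) : F :=
  (embedH S * monoH d *
      ∏ p ∈ (Finset.univ : Finset (Fin n × Fin n)).filter (fun p : Fin n × Fin n => p.1 < p.2),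
        (zetaH src tgt q t c p.1 p.2)⁻¹).coeff 0

/-- substitution `z_a ↦ z_{β a}` at the level of exponents -/
def pullback {ν : I → ℕ} (n : ℕ) (β : Fin n ≃ VarType ν) (R : Laur F ν) :
    AddMonoidAlgebra F (Fin n →₀ ℤ) :=
  AddMonoidAlgebra.mapDomain (fun m : VarType ν →₀ ℤ => Finsupp.equivMapDomain β.symm m) R

/-- The pairing `⟨e_w , R⟩` of a word with a symmetric Laurent polynomial (`0` if the
degrees do not match; the choice of the color-compatible bijection `β` is immaterial
when `R` is symmetric). -/
def pairWord (src tgt : E → I) (q : F) (t : E → F) (l : Word I) {ν : I → ℕ} (R : Laur F ν) :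
    F :=
  if h : ∃ β : Fin l.length ≃ VarType ν, ∀ a, (β a).1 = (l.get a).1 then
    pairCore src tgt q t (fun a => (l.get a).1) (fun a => (l.get a).2)
      (pullback l.length h.choose R)
  else 0

/-- The pairing of an arbitrary element of the free algebra with `R`, extended linearly
from words. -/
def pairFree (src tgt : E → I) (q : F) (t : E → F) (x : FreeAlgebra F (I × ℤ)) {ν : I → ℕ}
    (R : Laur F ν) : F :=
  Finsupp.sum
    (MonoidAlgebra.coeff ((FreeAlgebra.equivMonoidAlgebraFreeMonoid : FreeAlgebra F (I × ℤ) ≃ₐ[F]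
        MonoidAlgebra F (FreeMonoid (I × ℤ))) x))
    fun w cf => cf * pairWord src tgt q t (FreeMonoid.toList w) R

end QShuffle

namespace QShuffle

variable {I E : Type} [Fintype I] [Fintype E] [DecidableEq I] [DecidableEq E]
variable {F : Type} [Field F]

/-! ## The cubic elements `A^{(e)}_{a,b,c}`

We work with Laurent polynomials in the three variables `x₁ = z 0, x₂ = z 1, y = z 2`.
The rational prefactors appearing in `X^{(e)}` are Laurent polynomials after the
cancellations indicated in the paper; we define them in cancelled form. -/

abbrev L3 (F : Type) [Field F] : Type := AddMonoidAlgebra F (Fin 3 →₀ ℤ)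

/-- substitute the monomial with exponent vector `u` into a 1-variable Laurent polynomial -/
def comp3 (l : LaurentPolynomial F) (u : Fin 3 →₀ ℤ) : L3 F :=
  Finsupp.sum (AddMonoidAlgebra.coeff l) fun m a => AddMonoidAlgebra.single (m • u) a

/-- exponent vector of `z_b / z_a` -/
def uru (a b : Fin 3) : Fin 3 →₀ ℤ := Finsupp.single b 1 - Finsupp.single a 1

open LaurentPolynomial in
/-- `ζ̃_{ij}(x)` without its `(1 - x q⁻¹)^{δ_{ij}}` factor, i.e.
`ζ̃_{ii}(x)/(1 - x q⁻¹)` when `i = j`. -/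
def zetaNoQ (src tgt : E → I) (q : F) (t : E → F) (i j : I) : LaurentPolynomial F :=
  (∏ e ∈ edges src tgt i j, (C (t e)⁻¹ - T 1))
    * ∏ e ∈ edges src tgt j i, (1 - C (t e * q⁻¹) * T (-1))

open LaurentPolynomial in
/-- For an edge `e : i → j` of `Ē`, the Laurent polynomial `ζ̃_{ji}(x) / (1 - x q / t_e)`
(the displayed factor cancels a linear factor of `ζ̃_{ji}`). -/
def cancelA (src tgt : E → I) (q : F) (t : E → F) : DEdge E → LaurentPolynomial F
  | Sum.inl f =>
      (if tgt f = src f then 1 - C q⁻¹ * T 1 else 1)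
        * (∏ e' ∈ edges src tgt (tgt f) (src f), (C (t e')⁻¹ - T 1))
        * (∏ e' ∈ (edges src tgt (src f) (tgt f)).erase f, (1 - C (t e' * q⁻¹) * T (-1)))
        * (C (- (t f) * q⁻¹) * T (-1))
  | Sum.inr f =>
      (if src f = tgt f then 1 - C q⁻¹ * T 1 else 1)
        * (∏ e' ∈ (edges src tgt (src f) (tgt f)).erase f, (C (t e')⁻¹ - T 1))
        * (∏ e' ∈ edges src tgt (tgt f) (src f), (1 - C (t e' * q⁻¹) * T (-1)))
        * C (t f)⁻¹

open LaurentPolynomial in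
/-- For an edge `e : i → j` of `Ē`, the Laurent polynomial `ζ̃_{ij}(x) / (1 - x t_e)`. -/
def cancelB (src tgt : E → I) (q : F) (t : E → F) : DEdge E → LaurentPolynomial F
  | Sum.inl f =>
      (if src f = tgt f then 1 - C q⁻¹ * T 1 else 1)
        * (∏ e' ∈ (edges src tgt (src f) (tgt f)).erase f, (C (t e')⁻¹ - T 1))
        * (∏ e' ∈ edges src tgt (tgt f) (src f), (1 - C (t e' * q⁻¹) * T (-1)))
        * C (t f)⁻¹
  | Sum.inr f =>
      (if tgt f = src f then 1 - C q⁻¹ * T 1 else 1)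
        * (∏ e' ∈ edges src tgt (tgt f) (src f), (C (t e')⁻¹ - T 1))
        * (∏ e' ∈ (edges src tgt (src f) (tgt f)).erase f, (1 - C (t e' * q⁻¹) * T (-1)))
        * (C (- (t f) * q⁻¹) * T (-1))

/-- a Laurent monomial in `x₁, x₂, y` -/
def mono3 (a b c : ℤ) (cf : F) : L3 F :=
  AddMonoidAlgebra.single (Finsupp.equivFunOnFinite.symm ![a, b, c]) cf

variable (src tgt : E → I) (q : F) (t : E → F) in
/-- the Laurent-polynomial prefactor of `e_i(x₁)e_i(x₂)e_j(y)` in `X^{(e)}` -/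
def pref1 (e : DEdge E) : L3 F :=
  comp3 (zetaNoQ src tgt q t (dsrc src tgt e) (dsrc src tgt e)) (uru 0 1)
    * comp3 (zetaT src tgt q t (dtgt src tgt e) (dsrc src tgt e)) (uru 0 2)
    * comp3 (cancelA src tgt q t e) (uru 1 2)

variable (src tgt : E → I) (q : F) (t : E → F) in
/-- the Laurent-polynomial prefactor of `e_i(x₂)e_j(y)e_i(x₁)` in `X^{(e)}` -/
def pref2 (e : DEdge E) : L3 F :=
  comp3 (zetaT src tgt q t (dsrc src tgt e) (dsrc src tgt e)) (uru 1 0)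
    * comp3 (cancelA src tgt q t e) (uru 1 2)
    * comp3 (cancelB src tgt q t e) (uru 2 0)
    * mono3 0 1 (-1) (- dt q t e)
    * (mono3 (-1) 0 1 (-1 : F)) ^ dl (dsrc src tgt e) (dtgt src tgt e)

variable (src tgt : E → I) (q : F) (t : E → F) in
/-- the Laurent-polynomial prefactor of `e_j(y)e_i(x₁)e_i(x₂)` in `X^{(e)}` -/
def pref3 (e : DEdge E) : L3 F :=
  comp3 (zetaNoQ src tgt q t (dsrc src tgt e) (dsrc src tgt e)) (uru 0 1)
    * comp3 (cancelB src tgt q t e) (uru 2 0)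
    * comp3 (zetaT src tgt q t (dsrc src tgt e) (dtgt src tgt e)) (uru 2 1)
    * mono3 0 1 (-1) (dt q t e * q⁻¹)
    * (mono3 (-1) (-1) 2 (1 : F)) ^ dl (dsrc src tgt e) (dtgt src tgt e)

variable (q : F) (t : E → F) in
/-- the monomial shift `x₁^a (x₂/q)^b (y/t_e)^c` -/
def shift3 (e : DEdge E) (a b c : ℤ) : L3 F :=
  mono3 a b c (q ^ (-b) * (dt q t e) ^ (-c))

variable (src tgt : E → I) (q : F) (t : E → F) in
/-- The cubic element `A^{(e)}_{a,b,c}`, as an element of the free algebra: the constant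
term of `x₁^a (x₂/q)^b (y/t_e)^c / ((1-q)(1-t_e)^{δ_{ij}}(1-t_e/q)^{δ_{ij}}) ⬝ X^{(e)}`. -/
def Afree (e : DEdge E) (a b c : ℤ) : FreeAlgebra F (I × ℤ) :=
  ((1 - q)⁻¹ * ((1 - dt q t e) ^ dl (dsrc src tgt e) (dtgt src tgt e))⁻¹
      * ((1 - dt q t e * q⁻¹) ^ dl (dsrc src tgt e) (dtgt src tgt e))⁻¹) •
  (Finsupp.sum (AddMonoidAlgebra.coeff (shift3 q t e a b c * pref1 src tgt q t e)) (fun m cf =>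
      cf • (gen F I (dsrc src tgt e) (m 0) * gen F I (dsrc src tgt e) (m 1)
        * gen F I (dtgt src tgt e) (m 2)))
    + Finsupp.sum (AddMonoidAlgebra.coeff (shift3 q t e a b c * pref2 src tgt q t e)) (fun m cf =>
      cf • (gen F I (dsrc src tgt e) (m 1) * gen F I (dtgt src tgt e) (m 2)
        * gen F I (dsrc src tgt e) (m 0)))
    + Finsupp.sum (AddMonoidAlgebra.coeff (shift3 q t e a b c * pref3 src tgt q t e)) (fun m cf =>
      cf • (gen F I (dtgt src tgt e) (m 2) * gen F I (dsrc src tgt e) (m 0)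
        * gen F I (dsrc src tgt e) (m 1))))

/-- The relations defining the quantum loop group `U⁺ = Ũ⁺/J`: the quadratic relations
together with the vanishing of all the cubic elements. -/
inductive FullRel (src tgt : E → I) (q : F) (t : E → F) :
    FreeAlgebra F (I × ℤ) → FreeAlgebra F (I × ℤ) → Prop
  | quad {x y : FreeAlgebra F (I × ℤ)} : QuadRel src tgt q t x y → FullRel src tgt q t x y
  | cubic (e : DEdge E) (a b c : ℤ) : FullRel src tgt q t (Afree src tgt q t e a b c) 0

/-- The quantum loop group `U⁺ = Ũ⁺ / J`. -/
abbrev Uplus (src tgt : E → I) (q : F) (t : E → F) : Type :=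
  RingQuot (FullRel src tgt q t)

/-- `e_{i,d} ∈ U⁺` -/
def eUp (src tgt : E → I) (q : F) (t : E → F) (i : I) (d : ℤ) : Uplus src tgt q t :=
  RingQuot.mkAlgHom F (FullRel src tgt q t) (gen F I i d)

/-- the canonical projection `Ũ⁺ → U⁺` -/
def projU (src tgt : E → I) (q : F) (t : E → F) :
    Utilde src tgt q t →ₐ[F] Uplus src tgt q t :=
  RingQuot.liftAlgHom F ⟨RingQuot.mkAlgHom F (FullRel src tgt q t),
    fun _ _ hxy => RingQuot.mkAlgHom_rel F (FullRel.quad hxy)⟩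

/-- `J ⊆ Ũ⁺`: the two-sided ideal generated by the cubic elements, realized as the kernel
of the projection `Ũ⁺ → U⁺ = Ũ⁺/J`. -/
def Jset (src tgt : E → I) (q : F) (t : E → F) : Set (Utilde src tgt q t) :=
  {u | projU src tgt q t u = 0}

/-! ## Leading words -/

def totalDeg {I : Type} [Fintype I] (ν : I → ℕ) : ℕ := ∑ i, ν i

/-- The word associated to the monomial `∏ z_v^{m v}` and the ordering `σ` of its
variables: the `a`-th letter is `(σ a).1` with exponent
`d_a = k_a + ∑_{t>a} #_{i_a → i_t} - ∑_{s<a} #_{i_s → i_a}` where `k_a = -m (σ a)`. -/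
def assocWord (src tgt : E → I) {ν : I → ℕ} (m : VarType ν →₀ ℤ)
    (σ : Fin (totalDeg ν) ≃ VarType ν) : Word I :=
  List.ofFn fun a : Fin (totalDeg ν) =>
    ((σ a).1,
      - m (σ a)
        + ∑ t' ∈ Finset.univ.filter (fun t' : Fin (totalDeg ν) => a < t'),
            (nE src tgt (σ a).1 (σ t').1 : ℤ)
        - ∑ s ∈ Finset.univ.filter (fun s : Fin (totalDeg ν) => s < a),
            (nE src tgt (σ s).1 (σ a).1 : ℤ))

/-- `w` is the leading word of the monomial `m`: the lexicographically largest among the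
words associated to the orderings of its variables. -/
def IsLeadOfMono (src tgt : E → I) [LinearOrder I] {ν : I → ℕ} (m : VarType ν →₀ ℤ)
    (w : Word I) : Prop :=
  (∃ σ, w = assocWord src tgt m σ) ∧ ∀ σ, wordLE (assocWord src tgt m σ) w

/-- `w` is the leading word of `0 ≠ R ∈ 𝒱`: the largest of the leading words of the
monomials appearing in `R`. -/
def IsLead (src tgt : E → I) [LinearOrder I] {ν : I → ℕ} (R : Laur F ν) (w : Word I) : Prop :=
  (∃ m ∈ (AddMonoidAlgebra.coeff R).support, IsLeadOfMono src tgt m w) ∧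
    ∀ m ∈ (AddMonoidAlgebra.coeff R).support, ∀ σ, wordLE (assocWord src tgt m σ) w

end QShuffle

/-!
In degree `sgm i + sgm j`, with variables `x = z_{i1}` and `y = z_{j1}`, the shuffle product
of two one-variable elements is explicit. For `i ≠ j` it is
`z_{i1}^a * z_{j1}^b = x^a y^b ζ̃_{ij}(x/y)`, so after summing against the coefficients of
`ζ̃_{ji}` both sides of the quadratic relation equal `x^a y^b ζ̃_{ij}(x/y) ζ̃_{ji}(y/x)`.
For `i = j` the pole of `ζ_{ii}` makes the product the divided difference
`(y^a x^{b+1} ζ̃_{ii}(y/x) - x^a y^{b+1} ζ̃_{ii}(x/y)) / (x - y)`. After multiplication by `x - y`,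
the left-hand side `∑_m c_m z^{a+1-m} * z^{b+m}` of the relation becomes antisymmetric in `a`
and `b`, which is the relation; `x - y` cancels since Laurent polynomials form a domain.
The homomorphism `Ũ⁺ → 𝒱` then comes from the universal property of `Ũ⁺` as a quotient of the
free algebra.
-/

namespace QShuffle

variable {I E : Type} [Fintype I] [Fintype E] [DecidableEq I] [DecidableEq E]
variable {F : Type} [Field F]

section Monomials

variable {ν : I → ℕ}

def rnmRingHom (g : VarType ν ≃ VarType ν) : Laur F ν →+* Laur F ν :=
  AddMonoidAlgebra.mapDomainRingHom F (Finsupp.mapDomain.addMonoidHom g)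

lemma rnm_eq_rnmRingHom (g : VarType ν ≃ VarType ν) (R : Laur F ν) :
    rnm g R = rnmRingHom g R := by
  have h : (Finsupp.equivMapDomain g : (VarType ν →₀ ℤ) → (VarType ν →₀ ℤ))
      = Finsupp.mapDomain g := funext (Finsupp.equivMapDomain_eq_mapDomain g)
  rw [rnm, h]
  rfl

lemma rnm_refl (R : Laur F ν) : rnm (Equiv.refl _) R = R := by
  have h : (Finsupp.equivMapDomain (Equiv.refl _) : (VarType ν →₀ ℤ) → (VarType ν →₀ ℤ))
      = id := funext Finsupp.equivMapDomain_refl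
  rw [rnm, h]
  unfold AddMonoidAlgebra.mapDomain
  rw [Finsupp.mapDomain_id]

lemma mem_symSub_of_subsingleton_colors (h : ∀ v w : VarType ν, v.1 = w.1 → v = w)
    (R : Laur F ν) : R ∈ SymSub F ν := by
  intro g hg
  rw [show g = Equiv.refl _ from Equiv.ext fun v => h _ _ (hg v), rnm_refl]

def mono2 (x y : VarType ν) (u v : ℤ) : Laur F ν :=
  AddMonoidAlgebra.single (Finsupp.single x u + Finsupp.single y v) 1

lemma mono2_mul_mono2 (x y : VarType ν) (u v u' v' : ℤ) :
    (mono2 x y u v : Laur F ν) * mono2 x y u' v' = mono2 x y (u + u') (v + v') := by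
  simp only [mono2, AddMonoidAlgebra.single_mul_single, one_mul, Finsupp.single_add]
  abel_nf

lemma mono2_comm (x y : VarType ν) (u v : ℤ) : (mono2 x y u v : Laur F ν) = mono2 y x v u := by
  rw [mono2, mono2, add_comm]

lemma single_mul_single_eq_mono2 (x y : VarType ν) (u v : ℤ) :
    AddMonoidAlgebra.single (Finsupp.single x u) (1 : F) * AddMonoidAlgebra.single
      (Finsupp.single y v) 1 = mono2 x y u v := by
  rw [AddMonoidAlgebra.single_mul_single, one_mul, mono2]

lemma XV_eq_mono2_left (x y : VarType ν) : (XV x : Laur F ν) = mono2 x y 1 0 := by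
  rw [XV, mono2, Finsupp.single_zero, add_zero]

lemma XV_eq_mono2_right (x y : VarType ν) : (XV y : Laur F ν) = mono2 x y 0 1 := by
  rw [XV, mono2, Finsupp.single_zero, zero_add]

lemma XV_sub_XV_ne_zero {x y : VarType ν} (hxy : x ≠ y) : (XV x - XV y : Laur F ν) ≠ 0 := by
  rw [sub_ne_zero, XV, XV, Ne, AddMonoidAlgebra.single_left_inj one_ne_zero,
    Finsupp.single_left_inj one_ne_zero]
  exact hxy

lemma rnm_XV (g : VarType ν ≃ VarType ν) (x : VarType ν) :
    rnm g (XV x : Laur F ν) = XV (g x) := by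
  rw [rnm, XV, AddMonoidAlgebra.mapDomain_single, Finsupp.equivMapDomain_single, XV]

lemma rnm_mono2 (g : VarType ν ≃ VarType ν) (x y : VarType ν) (u v : ℤ) :
    rnm g (mono2 x y u v : Laur F ν) = mono2 (g x) (g y) u v := by
  rw [rnm, mono2, AddMonoidAlgebra.mapDomain_single, Finsupp.equivMapDomain_eq_mapDomain,
    Finsupp.mapDomain_add, Finsupp.mapDomain_single, Finsupp.mapDomain_single, mono2]

lemma rnm_compL (g : VarType ν ≃ VarType ν) (l : LaurentPolynomial F) (u : VarType ν →₀ ℤ) :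
    rnm g (compL l u) = compL l (Finsupp.equivMapDomain g u) := by
  simp only [compL, rnm_eq_rnmRingHom, map_finsuppSum, rnmRingHom,
    AddMonoidAlgebra.mapDomainRingHom_apply, AddMonoidAlgebra.mapDomain_single]
  refine Finsupp.sum_congr fun m _ => ?_
  simp [Finsupp.equivMapDomain_eq_mapDomain, Finsupp.mapDomain_smul]

lemma equivMapDomain_ratio (g : VarType ν ≃ VarType ν) (x y : VarType ν) :
    Finsupp.equivMapDomain g (ratio x y) = ratio (g x) (g y) := by
  ext v
  simp only [ratio, Finsupp.equivMapDomain_apply, Finsupp.coe_sub, Pi.sub_apply,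
    Finsupp.single_apply, Equiv.eq_symm_apply]

lemma mono2_mul_compL_ratio (x y : VarType ν) (u v : ℤ) (l : LaurentPolynomial F) :
    (mono2 x y u v : Laur F ν) * compL l (ratio x y)
      = Finsupp.sum (AddMonoidAlgebra.coeff l) fun m c => c • mono2 x y (u + m) (v - m) := by
  rw [compL, Finsupp.mul_sum]
  refine Finsupp.sum_congr fun m _ => ?_
  rw [mono2, AddMonoidAlgebra.single_mul_single, one_mul, mono2, AddMonoidAlgebra.smul_single',
    mul_one, ratio, smul_sub, Finsupp.smul_single, Finsupp.smul_single, smul_eq_mul, mul_one]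
  simp only [Finsupp.single_add, sub_eq_add_neg, Finsupp.single_neg]
  abel_nf

lemma sum_smul_mono2_mul (x y : VarType ν) (u v : ℤ) (l : LaurentPolynomial F) (K : Laur F ν) :
    (Finsupp.sum (AddMonoidAlgebra.coeff l) fun m c => c • (mono2 x y (u - m) (v + m) * K))
      = mono2 x y u v * compL l (ratio y x) * K := by
  rw [mono2_comm x y u v, mono2_mul_compL_ratio, Finsupp.sum_mul]
  exact Finsupp.sum_congr fun m _ => by rw [smul_mul_assoc, mono2_comm]

end Monomials

section DividedDifference

variable {ν : I → ℕ} (x y : VarType ν)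

def divDiff (A B : ℤ) : Laur F ν :=
  if A ≤ B then ∑ k ∈ Finset.range (B - A).toNat, mono2 x y (A + k) (B - 1 - k)
  else -∑ k ∈ Finset.range (A - B).toNat, mono2 x y (B + k) (A - 1 - k)

lemma sub_mul_sum_range_mono2 (A : ℤ) (n : ℕ) :
    (XV x - XV y : Laur F ν) * ∑ k ∈ Finset.range n, mono2 x y (A + k) (A + n - 1 - k)
      = mono2 x y (A + n) A - mono2 x y A (A + n) := by
  set f : ℕ → Laur F ν := fun k => mono2 x y (A + k) (A + n - k)
  have hterm : ∀ k : ℕ,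
      (XV x - XV y : Laur F ν) * mono2 x y (A + k) (A + n - 1 - k) = f (k + 1) - f k := by
    intro k
    simp only [f, XV_eq_mono2_left x y, XV_eq_mono2_right x y, sub_mul, mono2_mul_mono2]
    congr 2 <;> push_cast <;> ring
  rw [Finset.mul_sum, Finset.sum_congr rfl fun k _ => hterm k, Finset.sum_range_sub]
  simp only [f, Nat.cast_zero, add_zero, add_sub_cancel_right, sub_zero]

lemma sub_mul_divDiff (A B : ℤ) :
    (XV x - XV y : Laur F ν) * divDiff x y A B = mono2 x y B A - mono2 x y A B := by
  unfold divDiff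
  split_ifs with h
  · obtain ⟨n, rfl⟩ : ∃ n : ℕ, B = A + n := ⟨(B - A).toNat, by omega⟩
    simpa using sub_mul_sum_range_mono2 x y A n
  · obtain ⟨n, rfl⟩ : ∃ n : ℕ, A = B + n := ⟨(A - B).toNat, by omega⟩
    simp only [add_sub_cancel_left, Int.toNat_natCast, mul_neg, sub_mul_sum_range_mono2, neg_sub]

/-- For `l = ζ̃_{ii}` this is the shuffle product `z_{i1}^A * z_{i1}^B`. -/
def selfProd (l : LaurentPolynomial F) (A B : ℤ) : Laur F ν :=
  Finsupp.sum (AddMonoidAlgebra.coeff l) fun k c => c • divDiff x y (A + k) (B + 1 - k)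

lemma sub_mul_selfProd (l : LaurentPolynomial F) (A B : ℤ) :
    (XV x - XV y : Laur F ν) * selfProd x y l A B
      = mono2 y x A (B + 1) * compL l (ratio y x) - mono2 x y A (B + 1) * compL l (ratio x y) := by
  rw [mono2_mul_compL_ratio, mono2_mul_compL_ratio, ← Finsupp.sum_sub, selfProd, Finsupp.mul_sum]
  refine Finsupp.sum_congr fun k _ => ?_
  rw [mul_smul_comm, sub_mul_divDiff, smul_sub, mono2_comm y x]

lemma rnm_swap_selfProd {x y : VarType ν} (hxy : x ≠ y) (l : LaurentPolynomial F) (A B : ℤ) :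
    rnm (Equiv.swap x y) (selfProd x y l A B) = selfProd x y l A B := by
  have key := congrArg (rnm (Equiv.swap x y)) (sub_mul_selfProd x y l A B)
  simp only [rnm_eq_rnmRingHom, map_mul, map_sub] at key
  simp only [← rnm_eq_rnmRingHom, rnm_XV, rnm_mono2, rnm_compL, equivMapDomain_ratio,
    Equiv.swap_apply_left, Equiv.swap_apply_right] at key
  refine mul_left_cancel₀ (XV_sub_XV_ne_zero hxy) ?_
  rw [sub_mul_selfProd]
  linear_combination -key

lemma sub_mul_sum_smul_selfProd (l : LaurentPolynomial F) (a b : ℤ) :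
    (XV x - XV y) * (Finsupp.sum (AddMonoidAlgebra.coeff l) fun m c =>
        c • selfProd x y l (a + 1 - m) (b + m))
      = mono2 y x (a + 1) (b + 1) * compL l (ratio x y) * compL l (ratio y x)
        - mono2 x y (a + 1) (b + 1) * compL l (ratio y x) * compL l (ratio x y) := by
  rw [← sum_smul_mono2_mul, ← sum_smul_mono2_mul, ← Finsupp.sum_sub, Finsupp.mul_sum]
  refine Finsupp.sum_congr fun m _ => ?_
  rw [mul_smul_comm, sub_mul_selfProd, smul_sub, add_right_comm b m 1]

/-- Both sides are determined by their product with `z_x - z_y`, which is antisymmetric in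
`a` and `b`. -/
lemma sum_smul_selfProd_eq_neg {x y : VarType ν} (hxy : x ≠ y) (l : LaurentPolynomial F)
    (a b : ℤ) :
    (Finsupp.sum (AddMonoidAlgebra.coeff l) fun m c => c • selfProd x y l (a + 1 - m) (b + m))
      = -Finsupp.sum (AddMonoidAlgebra.coeff l) fun m c =>
          c • selfProd x y l (b + 1 - m) (a + m) := by
  refine mul_left_cancel₀ (XV_sub_XV_ne_zero hxy) ?_
  rw [mul_neg, sub_mul_sum_smul_selfProd, sub_mul_sum_smul_selfProd, mono2_comm y x (b + 1),
    mono2_comm x y (b + 1)]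
  ring

end DividedDifference

section TwoVariables

lemma incl1_ne_incl2 (ν ν' : I → ℕ) (x : VarType ν) (y : VarType ν') :
    incl1 ν ν' x ≠ incl2 ν ν' y := by
  intro h
  have key := congrArg (fun v : VarType (ν + ν') => (v.2 : ℕ) < ν v.1) h
  simp [incl1, incl2] at key

lemma eq_incl1_or_eq_incl2 {ν ν' : I → ℕ} (v : VarType (ν + ν')) :
    (∃ x, v = incl1 ν ν' x) ∨ ∃ y, v = incl2 ν ν' y := by
  obtain ⟨c, k⟩ := v
  induction k using Fin.addCases with
  | left k => exact Or.inl ⟨⟨c, k⟩, rfl⟩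
  | right k => exact Or.inr ⟨⟨c, k⟩, rfl⟩

instance (i : I) : Unique (VarType (sgm i)) where
  default := ⟨i, ⟨0, by simp [sgm]⟩⟩
  uniq v := varSubsingleton v _

variable (i j : I)

abbrev fstVar : VarType (sgm i + sgm j) := incl1 (sgm i) (sgm j) default

abbrev sndVar : VarType (sgm i + sgm j) := incl2 (sgm i) (sgm j) default

lemma eq_fstVar_or_eq_sndVar (v : VarType (sgm i + sgm j)) : v = fstVar i j ∨ v = sndVar i j := by
  rcases eq_incl1_or_eq_incl2 v with ⟨x, rfl⟩ | ⟨y, rfl⟩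
  · exact Or.inl (congrArg _ (Subsingleton.elim _ _))
  · exact Or.inr (congrArg _ (Subsingleton.elim _ _))

lemma fstVar_ne_sndVar : fstVar i j ≠ sndVar i j := incl1_ne_incl2 _ _ _ _

lemma embed1_oneVarM (a : ℤ) :
    embed1 (sgm i) (sgm j) (oneVarM F i a)
      = AddMonoidAlgebra.single (Finsupp.single (fstVar i j) a) 1 := by
  rw [embed1, oneVarM, AddMonoidAlgebra.mapDomain_single, Finsupp.mapDomain_single]
  rfl

lemma embed2_oneVarM (b : ℤ) :
    embed2 (sgm i) (sgm j) (oneVarM F j b)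
      = AddMonoidAlgebra.single (Finsupp.single (sndVar i j) b) 1 := by
  rw [embed2, oneVarM, AddMonoidAlgebra.mapDomain_single, Finsupp.mapDomain_single]
  rfl

lemma Kpoly_sgm (src tgt : E → I) (q : F) (t : E → F) :
    Kpoly src tgt q t (sgm i) (sgm j)
      = compL (zetaT src tgt q t i j) (ratio (fstVar i j) (sndVar i j))
          * (if i = j then (XV (fstVar i j) - XV (sndVar i j)) * XV (sndVar i j) else 1) := by
  have hne : ∀ k : I, ∀ p ∈ (Finset.univ : Finset (VarType (sgm k) × VarType (sgm k))).filter
      (fun p => p.1 ≠ p.2 ∧ p.1.1 = p.2.1), False := fun k p hp =>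
    (Finset.mem_filter.1 hp).2.1 (Subsingleton.elim _ _)
  unfold Kpoly
  rw [Fintype.prod_subsingleton _ (default, default),
    Finset.prod_eq_one fun p hp => (hne i p hp).elim,
    Finset.prod_eq_one fun p hp => (hne j p hp).elim, mul_one, mul_one]
  rfl

lemma natCast_prod_factorial_sgm :
    ((∏ c : I, (sgm i c).factorial * (sgm j c).factorial : ℕ) : F) = 1 := by
  rw [Finset.prod_eq_one fun c _ => by unfold sgm; split_ifs <;> rfl, Nat.cast_one]

end TwoVariables

section DistinctColors

variable {i j : I} (src tgt : E → I) (q : F) (t : E → F)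

lemma eq_of_fst_eq_of_ne (hij : i ≠ j) (v w : VarType (sgm i + sgm j)) (h : v.1 = w.1) :
    v = w := by
  rcases eq_fstVar_or_eq_sndVar i j v with rfl | rfl <;>
    rcases eq_fstVar_or_eq_sndVar i j w with rfl | rfl
  all_goals first | rfl | exact absurd h hij | exact absurd h.symm hij

lemma Dsym_sgm_of_ne (hij : i ≠ j) : Dsym F (sgm i + sgm j) = 1 :=
  Finset.prod_eq_one fun _ hp =>
    ((Finset.mem_filter.1 hp).2.1 (eq_of_fst_eq_of_ne hij _ _ (Finset.mem_filter.1 hp).2.2)).elim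

lemma sum_colorPres_of_ne (hij : i ≠ j) (X : Laur F (sgm i + sgm j)) :
    ∑ g : {g : Equiv.Perm (VarType (sgm i + sgm j)) // ColorPres g}, rnm g.1 X = X := by
  have : Subsingleton {g : Equiv.Perm (VarType (sgm i + sgm j)) // ColorPres g} :=
    ⟨fun g h => Subtype.ext (Equiv.ext fun v =>
      eq_of_fst_eq_of_ne hij _ _ ((g.2 v).trans (h.2 v).symm))⟩
  rw [Fintype.sum_subsingleton _ ⟨Equiv.refl _, fun _ => rfl⟩, rnm_refl]

lemma shuffleEq_oneVarM_of_ne (hij : i ≠ j) (a b : ℤ) :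
    ShuffleEq src tgt q t (oneVarM F i a) (oneVarM F j b)
      (mono2 (fstVar i j) (sndVar i j) a b
        * compL (zetaT src tgt q t i j) (ratio (fstVar i j) (sndVar i j))) := by
  rw [ShuffleEq, natCast_prod_factorial_sgm, one_smul, Dsym_sgm_of_ne hij, one_mul,
    sum_colorPres_of_ne hij, embed1_oneVarM, embed2_oneVarM, single_mul_single_eq_mono2, Kpoly_sgm,
    if_neg hij, mul_one]

end DistinctColors

section SameColor

variable (i : I) (src tgt : E → I) (q : F) (t : E → F)

lemma Dsym_sgm_self :
    Dsym F (sgm i + sgm i) = (XV (fstVar i i) - XV (sndVar i i))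
      * (XV (sndVar i i) - XV (fstVar i i)) := by
  have hne := fstVar_ne_sndVar i i
  have hset : (Finset.univ : Finset (VarType (sgm i + sgm i) × VarType (sgm i + sgm i))).filter
      (fun p => p.1 ≠ p.2 ∧ p.1.1 = p.2.1)
        = {(fstVar i i, sndVar i i), (sndVar i i, fstVar i i)} := by
    ext ⟨v, w⟩
    simp only [Finset.mem_filter, Finset.mem_univ, true_and, Finset.mem_insert,
      Finset.mem_singleton, Prod.mk.injEq]
    rcases eq_fstVar_or_eq_sndVar i i v with rfl | rfl <;>
      rcases eq_fstVar_or_eq_sndVar i i w with rfl | rfl <;>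
      simp [hne, hne.symm] <;> rfl
  rw [Dsym, hset, Finset.prod_pair (by simp [hne])]

lemma perm_eq_refl_or_eq_swap (g : Equiv.Perm (VarType (sgm i + sgm i))) :
    g = Equiv.refl _ ∨ g = Equiv.swap (fstVar i i) (sndVar i i) := by
  have hne := fstVar_ne_sndVar i i
  rcases eq_fstVar_or_eq_sndVar i i (g (fstVar i i)) with h0 | h0
  · have h1 : g (sndVar i i) = sndVar i i := (eq_fstVar_or_eq_sndVar i i _).resolve_left
      fun h => hne (g.injective (h0.trans h.symm))
    left
    ext1 v
    rcases eq_fstVar_or_eq_sndVar i i v with rfl | rfl <;> assumption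
  · have h1 : g (sndVar i i) = fstVar i i := (eq_fstVar_or_eq_sndVar i i _).resolve_right
      fun h => hne (g.injective (h0.trans h.symm))
    right
    ext1 v
    rcases eq_fstVar_or_eq_sndVar i i v with rfl | rfl
    · rw [h0, Equiv.swap_apply_left]
    · rw [h1, Equiv.swap_apply_right]

lemma sum_colorPres_self (X : Laur F (sgm i + sgm i)) :
    ∑ g : {g : Equiv.Perm (VarType (sgm i + sgm i)) // ColorPres g}, rnm g.1 X
      = X + rnm (Equiv.swap (fstVar i i) (sndVar i i)) X := by
  have hswap : ColorPres (Equiv.swap (fstVar i i) (sndVar i i)) := fun v => by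
    rcases eq_fstVar_or_eq_sndVar i i v with rfl | rfl
    · rw [Equiv.swap_apply_left]; rfl
    · rw [Equiv.swap_apply_right]; rfl
  have hne : (⟨Equiv.refl _, fun _ => rfl⟩ : {g // ColorPres g}) ≠ ⟨_, hswap⟩ := fun h =>
    fstVar_ne_sndVar i i (by simpa using congrArg (fun g => g.1 (fstVar i i)) h)
  rw [Fintype.sum_eq_add _ _ hne fun g hg => (hg.1 (Subtype.ext ?_)).elim, rnm_refl]
  exact (perm_eq_refl_or_eq_swap i g.1).resolve_right fun h => hg.2 (Subtype.ext h)

lemma selfProd_mem_symSub (l : LaurentPolynomial F) (A B : ℤ) :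
    selfProd (fstVar i i) (sndVar i i) l A B ∈ SymSub F (sgm i + sgm i) := by
  intro g _
  rcases perm_eq_refl_or_eq_swap i g with rfl | rfl
  · exact rnm_refl _
  · exact rnm_swap_selfProd (fstVar_ne_sndVar i i) l A B

lemma shuffleEq_oneVarM_self (a b : ℤ) :
    ShuffleEq src tgt q t (oneVarM F i a) (oneVarM F i b)
      (selfProd (fstVar i i) (sndVar i i) (zetaT src tgt q t i i) a b) := by
  rw [ShuffleEq, natCast_prod_factorial_sgm, one_smul, Dsym_sgm_self, sum_colorPres_self,
    embed1_oneVarM, embed2_oneVarM, single_mul_single_eq_mono2, Kpoly_sgm, if_pos rfl]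
  set x := fstVar i i
  set y := sndVar i i
  simp only [rnm_eq_rnmRingHom, map_mul, map_sub]
  simp only [← rnm_eq_rnmRingHom, rnm_XV, rnm_mono2, rnm_compL, equivMapDomain_ratio,
    Equiv.swap_apply_left, Equiv.swap_apply_right]
  have hP := sub_mul_selfProd x y (zetaT src tgt q t i i) a b
  have hx : (mono2 y x a b : Laur F (sgm i + sgm i)) * XV x = mono2 y x a (b + 1) := by
    rw [XV_eq_mono2_right y x, mono2_mul_mono2, add_zero]
  have hy : (mono2 x y a b : Laur F (sgm i + sgm i)) * XV y = mono2 x y a (b + 1) := by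
    rw [XV_eq_mono2_right x y, mono2_mul_mono2, add_zero]
  linear_combination (XV y - XV x) * hP
    - (XV x - XV y) * compL (zetaT src tgt q t i i) (ratio x y) * hy
    - (XV y - XV x) * compL (zetaT src tgt q t i i) (ratio y x) * hx

end SameColor

section ShuffleAlgebra

variable {src tgt : E → I} {q : F} {t : E → F} {V : Type} [Ring V] [Algebra F V]
  {ι : VV F I ≃ₗ[F] V}

lemma sum_smul_ι_inclV {ν : I → ℕ} (Z : ℤ →₀ F) (R : ℤ → SymSub F ν) :
    (Finsupp.sum Z fun m c => c • ι (inclV ν (R m)))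
      = ι (inclV ν (Finsupp.sum Z fun m c => c • R m)) := by
  simp only [map_finsuppSum, map_smul]

lemma coe_sum_smul_mk {ν : I → ℕ} (Z : ℤ →₀ F) (P : ℤ → Laur F ν)
    (hP : ∀ m, P m ∈ SymSub F ν) :
    ((Finsupp.sum Z fun m c => c • (⟨P m, hP m⟩ : SymSub F ν) : SymSub F ν) : Laur F ν)
      = Finsupp.sum Z fun m c => c • P m := by
  simp only [Finsupp.sum, Submodule.coe_sum, Submodule.coe_smul]

/-- Stated for any `ν` equal to `sgm i + sgm j`, so that the products in both orders can be
compared in a single graded piece. -/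
lemma oneVar_mul_oneVar_of_ne (hV : IsShuffleAlgebra src tgt q t V ι) {i j : I} (hij : i ≠ j)
    {ν : I → ℕ} (hν : sgm i + sgm j = ν) {x y : VarType ν} (hx : x.1 = i) (hy : y.1 = j)
    (a b : ℤ) (hP : mono2 x y a b * compL (zetaT src tgt q t i j) (ratio x y) ∈ SymSub F ν) :
    ι (inclV (sgm i) (oneVar F i a)) * ι (inclV (sgm j) (oneVar F j b)) = ι (inclV ν ⟨_, hP⟩) := by
  subst hν
  obtain rfl : x = fstVar i j := eq_of_fst_eq_of_ne hij _ _ hx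
  obtain rfl : y = sndVar i j := eq_of_fst_eq_of_ne hij _ _ hy
  exact hV.2 _ _ _ _ _ (shuffleEq_oneVarM_of_ne src tgt q t hij a b)

lemma oneVar_mul_oneVar_self (hV : IsShuffleAlgebra src tgt q t V ι) (i : I) (a b : ℤ) :
    ι (inclV (sgm i) (oneVar F i a)) * ι (inclV (sgm i) (oneVar F i b))
      = ι (inclV (sgm i + sgm i) ⟨_, selfProd_mem_symSub i (zetaT src tgt q t i i) a b⟩) :=
  hV.2 _ _ _ _ _ (shuffleEq_oneVarM_self i src tgt q t a b)

theorem quadRel_oneVar_of_ne (hV : IsShuffleAlgebra src tgt q t V ι) {i j : I} (hij : i ≠ j)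
    (a b : ℤ) :
    (Finsupp.sum (AddMonoidAlgebra.coeff (zetaT src tgt q t j i)) fun m c =>
        c • (ι (inclV (sgm i) (oneVar F i (a - m))) * ι (inclV (sgm j) (oneVar F j (b + m)))))
      = Finsupp.sum (AddMonoidAlgebra.coeff (zetaT src tgt q t i j)) fun m c =>
          c • (ι (inclV (sgm j) (oneVar F j (b - m)))
            * ι (inclV (sgm i) (oneVar F i (a + m)))) := by
  set x := fstVar i j
  set y := sndVar i j
  have hmem := mem_symSub_of_subsingleton_colors (F := F) (eq_of_fst_eq_of_ne hij)
  have hL : ∀ m : ℤ,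
      ι (inclV (sgm i) (oneVar F i (a - m))) * ι (inclV (sgm j) (oneVar F j (b + m)))
        = ι (inclV _ ⟨mono2 x y (a - m) (b + m) * compL (zetaT src tgt q t i j) (ratio x y),
            hmem _⟩) := fun m =>
    oneVar_mul_oneVar_of_ne hV hij rfl rfl rfl _ _ _
  have hR : ∀ m : ℤ,
      ι (inclV (sgm j) (oneVar F j (b - m))) * ι (inclV (sgm i) (oneVar F i (a + m)))
        = ι (inclV _ ⟨mono2 y x (b - m) (a + m) * compL (zetaT src tgt q t j i) (ratio y x),
            hmem _⟩) := fun m =>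
    oneVar_mul_oneVar_of_ne hV hij.symm (add_comm _ _) rfl rfl _ _ _
  simp only [hL, hR, sum_smul_ι_inclV]
  congr 2
  refine Subtype.ext ?_
  rw [coe_sum_smul_mk, coe_sum_smul_mk, sum_smul_mono2_mul, sum_smul_mono2_mul, mono2_comm,
    mul_right_comm]

theorem quadRel_oneVar_self (hV : IsShuffleAlgebra src tgt q t V ι) (i : I) (a b : ℤ) :
    (Finsupp.sum (AddMonoidAlgebra.coeff (zetaT src tgt q t i i)) fun m c =>
        c • (ι (inclV (sgm i) (oneVar F i (a + 1 - m))) * ι (inclV (sgm i) (oneVar F i (b + m)))))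
      = (-1 : F) • Finsupp.sum (AddMonoidAlgebra.coeff (zetaT src tgt q t i i)) fun m c =>
          c • (ι (inclV (sgm i) (oneVar F i (b + 1 - m)))
            * ι (inclV (sgm i) (oneVar F i (a + m)))) := by
  simp only [oneVar_mul_oneVar_self hV, sum_smul_ι_inclV]
  rw [← map_smul, ← map_smul]
  congr 2
  refine Subtype.ext ?_
  rw [Submodule.coe_smul, coe_sum_smul_mk, coe_sum_smul_mk, neg_one_smul]
  exact sum_smul_selfProd_eq_neg (fstVar_ne_sndVar i i) _ a b

theorem quadRel_oneVar (hV : IsShuffleAlgebra src tgt q t V ι) (i j : I) (a b : ℤ) :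
    (Finsupp.sum (AddMonoidAlgebra.coeff (zetaT src tgt q t j i)) fun m c =>
        c • (ι (inclV (sgm i) (oneVar F i (a + (dl i j : ℤ) - m)))
          * ι (inclV (sgm j) (oneVar F j (b + m)))))
      = ((-1 : F) ^ dl i j) • Finsupp.sum (AddMonoidAlgebra.coeff (zetaT src tgt q t i j))
          fun m c => c • (ι (inclV (sgm j) (oneVar F j (b + (dl i j : ℤ) - m)))
            * ι (inclV (sgm i) (oneVar F i (a + m)))) := by
  rcases eq_or_ne i j with rfl | hij
  · rw [show dl i i = 1 from if_pos rfl, Nat.cast_one, pow_one]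
    exact quadRel_oneVar_self hV i a b
  · simp only [show dl i j = 0 from if_neg hij, Nat.cast_zero, add_zero, pow_zero, one_smul]
    exact quadRel_oneVar_of_ne hV hij a b

end ShuffleAlgebra

section UniversalProperty

variable {A : Type} [Ring A] [Algebra F A] (src tgt : E → I) (q : F) (t : E → F)
  (f : I × ℤ → A)

lemma lift_quadLHS (i j : I) (a b : ℤ) :
    FreeAlgebra.lift F f (quadLHS src tgt q t i j a b)
      = Finsupp.sum (AddMonoidAlgebra.coeff (zetaT src tgt q t j i)) fun m c =>
          c • (f (i, a + (dl i j : ℤ) - m) * f (j, b + m)) := by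
  simp only [quadLHS, gen, map_finsuppSum, map_smul, map_mul, FreeAlgebra.lift_ι_apply]

lemma lift_quadRHS (i j : I) (a b : ℤ) :
    FreeAlgebra.lift F f (quadRHS src tgt q t i j a b)
      = ((-1 : F) ^ dl i j) • Finsupp.sum (AddMonoidAlgebra.coeff (zetaT src tgt q t i j))
          fun m c => c • (f (j, b + (dl i j : ℤ) - m) * f (i, a + m)) := by
  simp only [quadRHS, gen, map_finsuppSum, map_smul, map_mul, FreeAlgebra.lift_ι_apply]

theorem exists_algHom_utilde_of_quadRel
    (hf : ∀ (i j : I) (a b : ℤ),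
      (Finsupp.sum (AddMonoidAlgebra.coeff (zetaT src tgt q t j i)) fun m c =>
          c • (f (i, a + (dl i j : ℤ) - m) * f (j, b + m)))
        = ((-1 : F) ^ dl i j) • Finsupp.sum (AddMonoidAlgebra.coeff (zetaT src tgt q t i j))
            fun m c => c • (f (j, b + (dl i j : ℤ) - m) * f (i, a + m))) :
    ∃ Φ : Utilde src tgt q t →ₐ[F] A, ∀ (i : I) (d : ℤ), Φ (eU src tgt q t i d) = f (i, d) := by
  refine ⟨RingQuot.liftAlgHom F ⟨FreeAlgebra.lift F f, ?_⟩, fun i d => ?_⟩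
  · rintro _ _ ⟨i, j, a, b⟩
    rw [lift_quadLHS, lift_quadRHS, hf]
  · rw [eU, RingQuot.liftAlgHom_mkAlgHom_apply, gen, FreeAlgebra.lift_ι_apply]

end UniversalProperty

/-- In the big shuffle algebra `𝒱` (any `𝔽`-algebra `(V, ι)` whose
multiplication is the shuffle product), the one-variable elements
`E_i(z) = ∑_d z_{i1}^d z^{-d}` satisfy coefficientwise the quadratic relation
`E_i(z) E_j(w) ζ̃_{ji}(w/z) z^{δ_{ij}} = E_j(w) E_i(z) ζ̃_{ij}(z/w) (-w)^{δ_{ij}}`;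
consequently `e_{i,d} ↦ z_{i1}^d` induces an `𝔽`-algebra homomorphism `Υ̃ : Ũ⁺ → 𝒱`. -/
theorem statement0 {I E : Type} [Fintype I] [Fintype E] [DecidableEq I] [DecidableEq E]
    (src tgt : E → I) (V : Type) [Ring V] [Algebra (FF E) V]
    (ι : VV (FF E) I ≃ₗ[FF E] V)
    (hV : IsShuffleAlgebra src tgt (qq E) tt V ι) :
    (∀ (i j : I) (a b : ℤ),
      Finsupp.sum (AddMonoidAlgebra.coeff (zetaT src tgt (qq E) tt j i)) (fun m c =>
          c • (ι (inclV (sgm i) (oneVar (FF E) i (a + (dl i j : ℤ) - m)))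
            * ι (inclV (sgm j) (oneVar (FF E) j (b + m)))))
        = ((-1 : FF E) ^ dl i j) •
          Finsupp.sum (AddMonoidAlgebra.coeff (zetaT src tgt (qq E) tt i j)) (fun m c =>
            c • (ι (inclV (sgm j) (oneVar (FF E) j (b + (dl i j : ℤ) - m)))
              * ι (inclV (sgm i) (oneVar (FF E) i (a + m))))))
    ∧ ∃ Φ : Utilde src tgt (qq E) tt →ₐ[FF E] V,
        ∀ (i : I) (d : ℤ),
          Φ (eU src tgt (qq E) tt i d) = ι (inclV (sgm i) (oneVar (FF E) i d)) :=
  ⟨quadRel_oneVar hV, exists_algHom_utilde_of_quadRel src tgt (qq E) tt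
    (fun p => ι (inclV (sgm p.1) (oneVar (FF E) p.1 p.2))) (quadRel_oneVar hV)⟩

end QShuffle
end
end

section
/- Let A be any 𝔽₀-algebra containing elements e_{s,d} for s ∈ {i,j} and d ∈ ℤ whose generating series e_s(z) := Σ_d e_{s,d} z^{−d} satisfy, coefficientwise: (i) e_s(x)e_s(y)(xq−y) = e_s(y)e_s(x)(x−yq) for each s ∈ {i,j}; (ii) e_s(x)e_t(y)(x−yv) = e_t(y)e_s(x)(xv−y) for s ≠ t in {i,j}; and (iii) the cubic relation (x₁−yv)·e_i(x₁)e_i(x₂)e_j(y) + (x₂v−x₁v^{−1})·e_i(x₂)e_j(y)e_i(x₁) + (yv^{−1}−x₂)·e_j(y)e_i(x₁)e_i(x₂) = 0. Then the q-Serre relation holds coefficientwise: P(x₁,x₂,y) + P(x₂,x₁,y) = 0, where P(x₁,x₂,y) := e_i(x₁)e_i(x₂)e_j(y) − (v+v^{−1})·e_i(x₁)e_j(y)e_i(x₂) + e_j(y)e_i(x₁)e_i(x₂). -/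
/-!
Coefficientwise, `(v² - 1)` times the `q`-Serre element is an explicit linear combination of the
cubic relation (iii) at `(x₁, x₂, y)` and at `(x₂, x₁, y)` and of the quadratic relations (i), (ii)
multiplied on either side by the remaining generator. Since `v ≠ 0` and `v² ≠ 1` in `ℚ(v)`, the
`q`-Serre element vanishes.
-/

noncomputable section

/-- `𝔽₀ = ℚ(v)` -/
abbrev F0 : Type := RatFunc ℚ

/-- the variable `v ∈ ℚ(v)` -/
def vv : F0 := RatFunc.X

section QSerre

variable {K A : Type*} [Field K] [Ring A] [Algebra K A]

/-- The coefficient of `x₁^{-a} x₂^{-b} y^{-c}` in `P(x₁, x₂, y)`, with `E = e_i` and `F = e_j`. -/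
def qSerreTerm (v : K) (E F : ℤ → A) (a b c : ℤ) : A :=
  E a * E b * F c - (v + v⁻¹) • (E a * F c * E b) + F c * E a * E b

theorem qSerreTerm_add_qSerreTerm_eq_zero (v : K) (hv : v ≠ 0) (hq : v ^ 2 ≠ 1) (E F : ℤ → A)
    (hEE : ∀ a b, v ^ 2 • (E (a + 1) * E b) - E a * E (b + 1)
        = E b * E (a + 1) - v ^ 2 • (E (b + 1) * E a))
    (hEF : ∀ a b, E (a + 1) * F b - v • (E a * F (b + 1))
        = v • (F b * E (a + 1)) - F (b + 1) * E a)
    (hcubic : ∀ a b c,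
      E (a + 1) * E b * F c - v • (E a * E b * F (c + 1))
        + v • (E (b + 1) * F c * E a) - v⁻¹ • (E b * F c * E (a + 1))
        + v⁻¹ • (F (c + 1) * E a * E b) - F c * E a * E (b + 1) = 0)
    (a b c : ℤ) :
    qSerreTerm v E F a b c + qSerreTerm v E F b a c = 0 := by
  obtain ⟨a, rfl⟩ : ∃ a', a = a' + 1 := ⟨a - 1, by ring⟩
  have key : (v ^ 2 - 1) • (qSerreTerm v E F (a + 1) b c + qSerreTerm v E F b (a + 1) c) = 0 := by
    unfold qSerreTerm
    linear_combination (norm := skip)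
      hEE a b * F c + F c * hEE a b + v⁻¹ • (hEF a c * E b) + v • (hEF b c * E a)
        + v ^ 2 • (E b * hEF a c) + E a * hEF b c - hcubic a b c - v ^ 2 • hcubic b a c
    simp only [smul_mul_assoc, mul_smul_comm, mul_assoc, mul_sub, sub_mul, smul_sub, smul_add]
    match_scalars <;> field_simp <;> ring
  exact (smul_eq_zero.mp key).resolve_left (sub_ne_zero.mpr hq)

end QSerre

theorem vv_sq_ne_one : vv ^ 2 ≠ 1 := by
  intro h
  have hX : (Polynomial.X ^ 2 : Polynomial ℚ) = 1 :=
    RatFunc.algebraMap_injective ℚ (by simpa [vv, RatFunc.algebraMap_X] using h)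
  simpa using congrArg (Polynomial.eval 0) hX

/-- Let `A` be any `ℚ(v)`-algebra with elements `e_{s,d}` (`s ∈ {i,j}`,
`d ∈ ℤ`) satisfying, coefficientwise: (i) `e_s(x)e_s(y)(xq - y) = e_s(y)e_s(x)(x - yq)`
with `q = v²`; (ii) `e_s(x)e_t(y)(x - yv) = e_t(y)e_s(x)(xv - y)` for `s ≠ t`; and (iii) the
cubic relation
`(x₁ - yv)·e_i(x₁)e_i(x₂)e_j(y) + (x₂v - x₁v⁻¹)·e_i(x₂)e_j(y)e_i(x₁)
  + (yv⁻¹ - x₂)·e_j(y)e_i(x₁)e_i(x₂) = 0`.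
Then the `q`-Serre relation `P(x₁,x₂,y) + P(x₂,x₁,y) = 0` holds coefficientwise, where
`P(x₁,x₂,y) = e_i(x₁)e_i(x₂)e_j(y) - (v + v⁻¹)·e_i(x₁)e_j(y)e_i(x₂)
  + e_j(y)e_i(x₁)e_i(x₂)`. -/
theorem statement16 (A : Type) [Ring A] [Algebra F0 A] (ee : Bool → ℤ → A)
    (h1 : ∀ (s : Bool) (a b : ℤ),
      (vv ^ 2) • (ee s (a + 1) * ee s b) - ee s a * ee s (b + 1)
        = ee s b * ee s (a + 1) - (vv ^ 2) • (ee s (b + 1) * ee s a))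
    (h2 : ∀ (s t : Bool), s ≠ t → ∀ (a b : ℤ),
      ee s (a + 1) * ee t b - vv • (ee s a * ee t (b + 1))
        = vv • (ee t b * ee s (a + 1)) - ee t (b + 1) * ee s a)
    (h3 : ∀ (i j : Bool), i ≠ j → ∀ (a b c : ℤ),
      ee i (a + 1) * ee i b * ee j c - vv • (ee i a * ee i b * ee j (c + 1))
        + vv • (ee i (b + 1) * ee j c * ee i a) - vv⁻¹ • (ee i b * ee j c * ee i (a + 1))
        + vv⁻¹ • (ee j (c + 1) * ee i a * ee i b) - ee j c * ee i a * ee i (b + 1) = 0)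
    (i j : Bool) (hij : i ≠ j) (a b c : ℤ) :
    (ee i a * ee i b * ee j c - (vv + vv⁻¹) • (ee i a * ee j c * ee i b)
        + ee j c * ee i a * ee i b)
      + (ee i b * ee i a * ee j c - (vv + vv⁻¹) • (ee i b * ee j c * ee i a)
        + ee j c * ee i b * ee i a) = 0 :=
  qSerreTerm_add_qSerreTerm_eq_zero vv RatFunc.X_ne_zero vv_sq_ne_one (ee i) (ee j)
    (h1 i) (h2 i j hij) (h3 i j hij) a b c

end
end
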